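/- Assume K ≥ 4 and N ≥ 4. For a uniformly random labeling L and any pairwise distinct s₁, s₂, s₃, s₄ ∈ {1,…,K}, the product moment of the cross-counts satisfies E[a_{s₁s₂}·a_{s₃s₄}] = N_{s₁}N_{s₂}N_{s₃}N_{s₄}/((N−1)(N−3)). -/
import Mathlib


open Finset Filter MeasureTheory ProbabilityTheory Topology

namespace Crossmatch

/-- First endpoint (index `2j`, i.e., the paper's `2j-1` in 1-based indexing) of the `j`-th
matched pair in the fixed perfect matching on `{1, …, 2I}`. -/
def ep1 {I : ℕ} (j : Fin I) : Fin (2 * I) := ⟨2 * j.val, by have := j.isLt; omega⟩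

/-- Second endpoint (index `2j+1`, i.e., the paper's `2j`) of the `j`-th matched pair. -/
def ep2 {I : ℕ} (j : Fin I) : Fin (2 * I) := ⟨2 * j.val + 1, by have := j.isLt; omega⟩

/-- The set of labelings `L : {1,…,2I} → {1,…,K}` assigning label `s` to exactly `Nc s`
indices, for every `s`. -/
def labelings (I K : ℕ) (Nc : Fin K → ℕ) : Finset (Fin (2 * I) → Fin K) :=
  univ.filter fun L => ∀ s : Fin K, (univ.filter fun i => L i = s).card = Nc s

/-- The count `a_{st}(L)`: the number of matched pairs `j` with `{L(2j-1), L(2j)} = {s,t}`.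
For `s ≠ t` this is the cross-count; for `s = t` it is the pure count (both endpoints labeled
`s`). -/
def crossCount (I K : ℕ) (L : Fin (2 * I) → Fin K) (s t : Fin K) : ℕ :=
  (univ.filter fun j : Fin I =>
    ({L (ep1 j), L (ep2 j)} : Finset (Fin K)) = ({s, t} : Finset (Fin K))).card

/-- Expectation of a real-valued statistic under a uniformly random labeling. -/
noncomputable def expct (I K : ℕ) (Nc : Fin K → ℕ)
    (X : (Fin (2 * I) → Fin K) → ℝ) : ℝ :=
  (∑ L ∈ labelings I K Nc, X L) / ((labelings I K Nc).card : ℝ)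

open Classical in
/-- Probability of an event under a uniformly random labeling. -/
noncomputable def pr (I K : ℕ) (Nc : Fin K → ℕ)
    (ev : (Fin (2 * I) → Fin K) → Prop) : ℝ :=
  (((labelings I K Nc).filter ev).card : ℝ) / ((labelings I K Nc).card : ℝ)

/-- Variance of a real-valued statistic under a uniformly random labeling. -/
noncomputable def variance (I K : ℕ) (Nc : Fin K → ℕ)
    (X : (Fin (2 * I) → Fin K) → ℝ) : ℝ :=
  expct I K Nc (fun L => (X L - expct I K Nc X) ^ 2)

/-- Covariance of two real-valued statistics under a uniformly random labeling. -/
noncomputable def covar (I K : ℕ) (Nc : Fin K → ℕ)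
    (X Y : (Fin (2 * I) → Fin K) → ℝ) : ℝ :=
  expct I K Nc (fun L => (X L - expct I K Nc X) * (Y L - expct I K Nc Y))

/-- The index set of (unordered) pairs `s < t`, indexing the cross-count vector. -/
abbrev Pairs (K : ℕ) := {q : Fin K × Fin K // q.1 < q.2}

/-- The covariance matrix of the cross-count vector `(a_{st})_{s<t}` under a uniformly
random labeling. -/
noncomputable def covMatrix (I K : ℕ) (Nc : Fin K → ℕ) :
    Matrix (Pairs K) (Pairs K) ℝ :=
  Matrix.of fun q r =>
    covar I K Nc (fun L => (crossCount I K L q.1.1 q.1.2 : ℝ))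
      (fun L => (crossCount I K L r.1.1 r.1.2 : ℝ))

private lemma forall_fin4 {p : Fin 4 → Prop} : (∀ a, p a) ↔ p 0 ∧ p 1 ∧ p 2 ∧ p 3 :=
  ⟨fun h => ⟨h 0, h 1, h 2, h 3⟩, fun ⟨h0, h1, h2, h3⟩ a => by fin_cases a <;> assumption⟩

private lemma finset_pair_eq {K : ℕ} {a b s t : Fin K} :
    ({a, b} : Finset (Fin K)) = {s, t} ↔ (a = s ∧ b = t) ∨ (a = t ∧ b = s) := by
  rw [← Finset.coe_inj]
  simp only [Finset.coe_insert, Finset.coe_singleton]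
  exact Set.pair_eq_pair_iff

private lemma exists_perm_comp {n : ℕ} {β : Type*} [Fintype β] [DecidableEq β]
    (f g : Fin n ↪ β) : ∃ σ : Equiv.Perm β, ∀ a, σ (f a) = g a := by
  classical
  have hc : Fintype.card ((Set.range ⇑f)ᶜ : Set β) = Fintype.card ((Set.range ⇑g)ᶜ : Set β) := by
    rw [Fintype.card_compl_set, Fintype.card_compl_set,
      Set.card_range_of_injective f.injective, Set.card_range_of_injective g.injective]
  let c := Fintype.equivOfCardEq hc
  let ef : Fin n ≃ Set.range ⇑f := Equiv.ofInjective f f.injective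
  let eg : Fin n ≃ Set.range ⇑g := Equiv.ofInjective g g.injective
  refine ⟨(Equiv.Set.sumCompl (Set.range ⇑f)).symm.trans
    (((ef.symm.trans eg).sumCongr c).trans (Equiv.Set.sumCompl (Set.range ⇑g))), fun a => ?_⟩
  simp only [Equiv.trans_apply]
  rw [Equiv.Set.sumCompl_symm_apply_of_mem (Set.mem_range_self a)]
  simp [ef, eg]

private lemma comp_mem_labelings {I K : ℕ} {Nc : Fin K → ℕ} (σ : Equiv.Perm (Fin (2 * I)))
    {L : Fin (2 * I) → Fin K} (hL : L ∈ labelings I K Nc) : (L ∘ σ) ∈ labelings I K Nc := by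
  simp only [labelings, mem_filter, mem_univ, true_and] at hL ⊢
  intro s
  rw [← hL s]
  have h : (univ.filter fun i => (L ∘ σ) i = s)
      = (univ.filter fun i => L i = s).map σ.symm.toEmbedding := by
    ext i
    simp [Finset.mem_map_equiv]
  rw [h, Finset.card_map]

private lemma cnt_eq {I K : ℕ} (Nc : Fin K → ℕ) (t : Fin 4 → Fin K)
    (f g : Fin 4 ↪ Fin (2 * I)) :
    ((labelings I K Nc).filter fun L => ∀ a, L (f a) = t a).card
      = ((labelings I K Nc).filter fun L => ∀ a, L (g a) = t a).card := by
  classical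
  obtain ⟨σ, hσ⟩ := exists_perm_comp f g
  refine Finset.card_bij' (fun L _ => L ∘ σ.symm) (fun M _ => M ∘ σ) ?_ ?_ ?_ ?_
  · intro L hL
    rw [mem_filter] at hL ⊢
    refine ⟨comp_mem_labelings σ.symm hL.1, fun a => ?_⟩
    have : σ.symm (g a) = f a := by rw [← hσ a, Equiv.symm_apply_apply]
    simp only [Function.comp_apply, this]
    exact hL.2 a
  · intro M hM
    rw [mem_filter] at hM ⊢
    refine ⟨comp_mem_labelings σ hM.1, fun a => ?_⟩
    simp only [Function.comp_apply, hσ a]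
    exact hM.2 a
  · intro L _; funext i; simp
  · intro M _; funext i; simp


private lemma per_L {I K : ℕ} {Nc : Fin K → ℕ} {L : Fin (2 * I) → Fin K}
    (hL : L ∈ labelings I K Nc) {t : Fin 4 → Fin K} (ht : Function.Injective t) :
    (univ.filter fun f : Fin 4 ↪ Fin (2 * I) => ∀ a, L (f a) = t a).card = ∏ a, Nc (t a) := by
  classical
  rw [← Fintype.card_subtype]
  have hmem : ∀ s : Fin K, (univ.filter fun i => L i = s).card = Nc s := by
    simpa only [labelings, mem_filter, mem_univ, true_and] using hL
  have E : {f : Fin 4 ↪ Fin (2 * I) // ∀ a, L (f a) = t a}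
      ≃ (∀ a : Fin 4, {x : Fin (2 * I) // L x = t a}) :=
    { toFun := fun F a => ⟨F.1 a, F.2 a⟩
      invFun := fun u => ⟨⟨fun a => (u a).1,
        fun a b hab => ht (((u a).2.symm.trans (congrArg L hab)).trans ((u b).2))⟩, fun a => (u a).2⟩
      left_inv := fun F => Subtype.ext (DFunLike.ext _ _ fun a => rfl)
      right_inv := fun u => rfl }
  rw [Fintype.card_congr E, Fintype.card_pi]
  refine Finset.prod_congr rfl fun a _ => ?_
  rw [Fintype.card_subtype]
  exact hmem (t a)

private lemma count_key {I K : ℕ} (Nc : Fin K → ℕ)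
    {t : Fin 4 → Fin K} (ht : Function.Injective t) (f : Fin 4 ↪ Fin (2 * I)) :
    ((labelings I K Nc).filter fun L => ∀ a, L (f a) = t a).card * (2 * I).descFactorial 4
      = (labelings I K Nc).card * ∏ a, Nc (t a) := by
  classical
  have h1 : ∑ g : Fin 4 ↪ Fin (2 * I),
      ((labelings I K Nc).filter fun L => ∀ a, L (g a) = t a).card
      = ((labelings I K Nc).filter fun L => ∀ a, L (f a) = t a).card
          * (2 * I).descFactorial 4 := by
    rw [Finset.sum_congr rfl fun g _ => cnt_eq Nc t g f, Finset.sum_const, smul_eq_mul,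
      mul_comm, Finset.card_univ, Fintype.card_embedding_eq, Fintype.card_fin, Fintype.card_fin]
  rw [← h1]
  calc ∑ g : Fin 4 ↪ Fin (2 * I),
        ((labelings I K Nc).filter fun L => ∀ a, L (g a) = t a).card
      = ∑ g : Fin 4 ↪ Fin (2 * I), ∑ L ∈ labelings I K Nc,
          if (∀ a, L (g a) = t a) then 1 else 0 :=
        Finset.sum_congr rfl fun g _ => Finset.card_filter _ _
    _ = ∑ L ∈ labelings I K Nc, ∑ g : Fin 4 ↪ Fin (2 * I),
          if (∀ a, L (g a) = t a) then 1 else 0 := Finset.sum_comm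
    _ = ∑ L ∈ labelings I K Nc, ∏ a, Nc (t a) := Finset.sum_congr rfl fun L hL => by
          rw [← Finset.card_filter]; exact per_L hL ht
    _ = (labelings I K Nc).card * ∏ a, Nc (t a) := by
          rw [Finset.sum_const, smul_eq_mul]

private def sigmaFiber {K : ℕ} (Nc : Fin K → ℕ) (s : Fin K) :
    {y : Σ j : Fin K, Fin (Nc j) // y.1 = s} ≃ Fin (Nc s) where
  toFun y := Fin.cast (congrArg Nc y.2) y.1.2
  invFun b := ⟨⟨s, b⟩, rfl⟩
  left_inv := by rintro ⟨⟨j, b⟩, rfl⟩; rfl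
  right_inv b := rfl

private lemma labelings_nonempty {I K : ℕ} {Nc : Fin K → ℕ} (hNsum : ∑ s, Nc s = 2 * I) :
    (labelings I K Nc).Nonempty := by
  classical
  have hcard : Fintype.card (Σ s : Fin K, Fin (Nc s)) = Fintype.card (Fin (2 * I)) := by
    simp [hNsum]
  obtain ⟨e⟩ : Nonempty ((Σ s : Fin K, Fin (Nc s)) ≃ Fin (2 * I)) :=
    ⟨Fintype.equivOfCardEq hcard⟩
  refine ⟨fun x => (e.symm x).1, ?_⟩
  simp only [labelings, mem_filter, mem_univ, true_and]
  intro s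
  rw [← Fintype.card_subtype]
  have E : {i : Fin (2 * I) // (e.symm i).1 = s} ≃ Fin (Nc s) :=
    (Equiv.subtypeEquiv e.symm fun i => Iff.rfl).trans (sigmaFiber Nc s)
  rw [Fintype.card_congr E, Fintype.card_fin]


theorem stmt7 (K I : ℕ) (hK : 4 ≤ K) (hI : 1 ≤ I) (hN : 4 ≤ 2 * I)
    (Nc : Fin K → ℕ) (hNpos : ∀ s, 0 < Nc s) (hNsum : ∑ s, Nc s = 2 * I)
    (s₁ s₂ s₃ s₄ : Fin K) (h12 : s₁ ≠ s₂) (h13 : s₁ ≠ s₃) (h14 : s₁ ≠ s₄)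
    (h23 : s₂ ≠ s₃) (h24 : s₂ ≠ s₄) (h34 : s₃ ≠ s₄) :
    expct I K Nc (fun L => (crossCount I K L s₁ s₂ : ℝ) * (crossCount I K L s₃ s₄ : ℝ))
      = (Nc s₁ : ℝ) * (Nc s₂ : ℝ) * (Nc s₃ : ℝ) * (Nc s₄ : ℝ)
          / (((2 * I : ℝ) - 1) * ((2 * I : ℝ) - 3)) := by
  classical
  obtain ⟨q, rfl⟩ : ∃ q, I = q + 2 := ⟨I - 2, by omega⟩
  set lab := labelings (q + 2) K Nc with hlab
  set cond1 : Fin (q + 2) → (Fin (2 * (q + 2)) → Fin K) → Prop :=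
    fun j L => ({L (ep1 j), L (ep2 j)} : Finset (Fin K)) = {s₁, s₂} with hcond1
  set cond2 : Fin (q + 2) → (Fin (2 * (q + 2)) → Fin K) → Prop :=
    fun j L => ({L (ep1 j), L (ep2 j)} : Finset (Fin K)) = {s₃, s₄} with hcond2
  set Snat : ℕ :=
    ∑ L ∈ lab, crossCount (q + 2) K L s₁ s₂ * crossCount (q + 2) K L s₃ s₄ with hSnat
  set D : ℕ := (2 * (q + 2)).descFactorial 4 with hD
  set P : ℕ := Nc s₁ * (Nc s₂ * (Nc s₃ * Nc s₄)) with hP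
  -- Step 1: expand the product of counts
  have hS : Snat = ∑ j : Fin (q + 2), ∑ k : Fin (q + 2),
      (lab.filter fun L => cond1 j L ∧ cond2 k L).card := by
    have e1 : ∀ L, crossCount (q + 2) K L s₁ s₂ = ∑ j : Fin (q + 2), if cond1 j L then 1 else 0 :=
      fun L => Finset.card_filter _ _
    have e2 : ∀ L, crossCount (q + 2) K L s₃ s₄ = ∑ k : Fin (q + 2), if cond2 k L then 1 else 0 :=
      fun L => Finset.card_filter _ _
    calc Snat = ∑ L ∈ lab, ∑ j : Fin (q + 2), ∑ k : Fin (q + 2),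
          if cond1 j L ∧ cond2 k L then 1 else 0 := by
          refine Finset.sum_congr rfl fun L _ => ?_
          rw [e1, e2, Finset.sum_mul_sum]
          simp only [ite_zero_mul_ite_zero, one_mul]
      _ = ∑ j : Fin (q + 2), ∑ L ∈ lab, ∑ k : Fin (q + 2),
          if cond1 j L ∧ cond2 k L then 1 else 0 := Finset.sum_comm
      _ = ∑ j : Fin (q + 2), ∑ k : Fin (q + 2), ∑ L ∈ lab,
          if cond1 j L ∧ cond2 k L then 1 else 0 :=
          Finset.sum_congr rfl fun j _ => Finset.sum_comm
      _ = ∑ j : Fin (q + 2), ∑ k : Fin (q + 2),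
            (lab.filter fun L => cond1 j L ∧ cond2 k L).card :=
          Finset.sum_congr rfl fun j _ => Finset.sum_congr rfl fun k _ =>
            (Finset.card_filter _ _).symm
  -- diagonal terms vanish
  have hdiag : ∀ j : Fin (q + 2), (lab.filter fun L => cond1 j L ∧ cond2 j L).card = 0 := by
    intro j
    rw [Finset.card_eq_zero, Finset.filter_eq_empty_iff]
    rintro L - ⟨hc1, hc2⟩
    have h := hc1.symm.trans hc2
    have hmem : s₁ ∈ ({s₃, s₄} : Finset (Fin K)) := by
      rw [← h]; simp
    simp only [Finset.mem_insert, Finset.mem_singleton] at hmem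
    rcases hmem with h' | h'
    · exact h13 h'
    · exact h14 h'
  -- off-diagonal
  have hoff : ∀ j k : Fin (q + 2), j ≠ k →
      (lab.filter fun L => cond1 j L ∧ cond2 k L).card * D = 4 * (lab.card * P) := by
    intro j k hjk
    have hjk' : (j : ℕ) ≠ (k : ℕ) := fun h => hjk (Fin.val_injective h)
    obtain ⟨f, hf0, hf1, hf2, hf3⟩ : ∃ f : Fin 4 ↪ Fin (2 * (q + 2)),
        f 0 = ep1 j ∧ f 1 = ep2 j ∧ f 2 = ep1 k ∧ f 3 = ep2 k := by
      refine ⟨⟨fun a => ⟨if a.val < 2 then 2 * j.val + a.val else 2 * k.val + (a.val - 2), by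
          have hj := j.isLt; have hk := k.isLt; split <;> omega⟩, ?_⟩, rfl, rfl, rfl, rfl⟩
      intro a b hab
      have h : (if (a : ℕ) < 2 then 2 * j.val + a.val else 2 * k.val + (a.val - 2))
          = (if (b : ℕ) < 2 then 2 * j.val + b.val else 2 * k.val + (b.val - 2)) :=
        congrArg Fin.val hab
      have ha := a.isLt; have hb := b.isLt
      apply Fin.ext
      split_ifs at h <;> omega
    have hEiff : ∀ (x1 x2 x3 x4 : Fin K) (L : Fin (2 * (q + 2)) → Fin K),
        (∀ a : Fin 4, L (f a) = ![x1, x2, x3, x4] a)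
          ↔ (L (ep1 j) = x1 ∧ L (ep2 j) = x2 ∧ L (ep1 k) = x3 ∧ L (ep2 k) = x4) := by
      intro x1 x2 x3 x4 L
      rw [forall_fin4, hf0, hf1, hf2, hf3]
      exact Iff.rfl
    have hinj : ∀ {x1 x2 x3 x4 : Fin K}, x1 ≠ x2 → x1 ≠ x3 → x1 ≠ x4 → x2 ≠ x3 → x2 ≠ x4 →
        x3 ≠ x4 → Function.Injective ![x1, x2, x3, x4] := by
      intro x1 x2 x3 x4 a12 a13 a14 a23 a24 a34 a b hab
      fin_cases a <;> fin_cases b <;>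
        first
        | rfl
        | exact absurd hab (by first
            | exact a12 | exact a13 | exact a14 | exact a23 | exact a24 | exact a34
            | exact a12.symm | exact a13.symm | exact a14.symm | exact a23.symm
            | exact a24.symm | exact a34.symm)
    have hsplit : ∀ L, (cond1 j L ∧ cond2 k L) ↔
        ((L (ep1 j) = s₁ ∧ L (ep2 j) = s₂ ∧ L (ep1 k) = s₃ ∧ L (ep2 k) = s₄) ∨
         (L (ep1 j) = s₂ ∧ L (ep2 j) = s₁ ∧ L (ep1 k) = s₃ ∧ L (ep2 k) = s₄) ∨
         (L (ep1 j) = s₁ ∧ L (ep2 j) = s₂ ∧ L (ep1 k) = s₄ ∧ L (ep2 k) = s₃) ∨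
         (L (ep1 j) = s₂ ∧ L (ep2 j) = s₁ ∧ L (ep1 k) = s₄ ∧ L (ep2 k) = s₃)) := by
      intro L
      have A := finset_pair_eq (a := L (ep1 j)) (b := L (ep2 j)) (s := s₁) (t := s₂)
      have B := finset_pair_eq (a := L (ep1 k)) (b := L (ep2 k)) (s := s₃) (t := s₄)
      simp only [hcond1, hcond2]
      rw [A, B]
      constructor
      · rintro ⟨h1 | h1, h2 | h2⟩
        · exact Or.inl ⟨h1.1, h1.2, h2.1, h2.2⟩
        · exact Or.inr (Or.inr (Or.inl ⟨h1.1, h1.2, h2.1, h2.2⟩))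
        · exact Or.inr (Or.inl ⟨h1.1, h1.2, h2.1, h2.2⟩)
        · exact Or.inr (Or.inr (Or.inr ⟨h1.1, h1.2, h2.1, h2.2⟩))
      · rintro (⟨e0, e1, e2, e3⟩ | ⟨e0, e1, e2, e3⟩ | ⟨e0, e1, e2, e3⟩ | ⟨e0, e1, e2, e3⟩)
        · exact ⟨Or.inl ⟨e0, e1⟩, Or.inl ⟨e2, e3⟩⟩
        · exact ⟨Or.inr ⟨e0, e1⟩, Or.inl ⟨e2, e3⟩⟩
        · exact ⟨Or.inl ⟨e0, e1⟩, Or.inr ⟨e2, e3⟩⟩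
        · exact ⟨Or.inr ⟨e0, e1⟩, Or.inr ⟨e2, e3⟩⟩
    have hcard4 : (lab.filter fun L => cond1 j L ∧ cond2 k L).card =
        (lab.filter fun L => L (ep1 j) = s₁ ∧ L (ep2 j) = s₂ ∧ L (ep1 k) = s₃ ∧ L (ep2 k) = s₄).card +
        (lab.filter fun L => L (ep1 j) = s₂ ∧ L (ep2 j) = s₁ ∧ L (ep1 k) = s₃ ∧ L (ep2 k) = s₄).card +
        (lab.filter fun L => L (ep1 j) = s₁ ∧ L (ep2 j) = s₂ ∧ L (ep1 k) = s₄ ∧ L (ep2 k) = s₃).card +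
        (lab.filter fun L => L (ep1 j) = s₂ ∧ L (ep2 j) = s₁ ∧ L (ep1 k) = s₄ ∧ L (ep2 k) = s₃).card := by
      rw [Finset.card_filter, Finset.card_filter, Finset.card_filter, Finset.card_filter,
        Finset.card_filter, ← Finset.sum_add_distrib, ← Finset.sum_add_distrib,
        ← Finset.sum_add_distrib]
      refine Finset.sum_congr rfl fun L _ => ?_
      by_cases h : cond1 j L ∧ cond2 k L
      · rw [if_pos h]
        rcases (hsplit L).mp h with ⟨e0, e1, e2, e3⟩ | ⟨e0, e1, e2, e3⟩ |
          ⟨e0, e1, e2, e3⟩ | ⟨e0, e1, e2, e3⟩ <;>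
          simp_all
      · rw [if_neg h,
          if_neg (fun hc => h ((hsplit L).mpr (Or.inl hc))),
          if_neg (fun hc => h ((hsplit L).mpr (Or.inr (Or.inl hc)))),
          if_neg (fun hc => h ((hsplit L).mpr (Or.inr (Or.inr (Or.inl hc))))),
          if_neg (fun hc => h ((hsplit L).mpr (Or.inr (Or.inr (Or.inr hc)))))]
    have hfc : ∀ (x1 x2 x3 x4 : Fin K),
        (lab.filter fun L => ∀ a, L (f a) = ![x1, x2, x3, x4] a) =
        (lab.filter fun L =>
          L (ep1 j) = x1 ∧ L (ep2 j) = x2 ∧ L (ep1 k) = x3 ∧ L (ep2 k) = x4) :=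
      fun x1 x2 x3 x4 => Finset.filter_congr fun L _ => hEiff x1 x2 x3 x4 L
    have hk1 := count_key Nc (hinj h12 h13 h14 h23 h24 h34) f
    have hk2 := count_key Nc (hinj h12.symm h23 h24 h13 h14 h34) f
    have hk3 := count_key Nc (hinj h12 h14 h13 h24 h23 h34.symm) f
    have hk4 := count_key Nc (hinj h12.symm h24 h23 h14 h13 h34.symm) f
    rw [hfc] at hk1 hk2 hk3 hk4
    rw [hcard4, add_mul, add_mul, add_mul, hk1, hk2, hk3, hk4]
    have hp1 : (∏ a, Nc (![s₁, s₂, s₃, s₄] a)) = P := by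
      rw [Fin.prod_univ_four]
      show Nc s₁ * Nc s₂ * Nc s₃ * Nc s₄ = P
      rw [hP]; ring
    have hp2 : (∏ a, Nc (![s₂, s₁, s₃, s₄] a)) = P := by
      rw [Fin.prod_univ_four]
      show Nc s₂ * Nc s₁ * Nc s₃ * Nc s₄ = P
      rw [hP]; ring
    have hp3 : (∏ a, Nc (![s₁, s₂, s₄, s₃] a)) = P := by
      rw [Fin.prod_univ_four]
      show Nc s₁ * Nc s₂ * Nc s₄ * Nc s₃ = P
      rw [hP]; ring
    have hp4 : (∏ a, Nc (![s₂, s₁, s₄, s₃] a)) = P := by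
      rw [Fin.prod_univ_four]
      show Nc s₂ * Nc s₁ * Nc s₄ * Nc s₃ = P
      rw [hP]; ring
    rw [hp1, hp2, hp3, hp4]
    ring
  -- assemble the key identity
  have key : Snat * D = (q + 2) * ((q + 1) * (4 * (lab.card * P))) := by
    rw [hS, Finset.sum_mul]
    have hrow : ∀ j : Fin (q + 2),
        (∑ k : Fin (q + 2), (lab.filter fun L => cond1 j L ∧ cond2 k L).card) * D
          = (q + 1) * (4 * (lab.card * P)) := by
      intro j
      rw [Finset.sum_mul]
      have hterm : ∀ k : Fin (q + 2), (lab.filter fun L => cond1 j L ∧ cond2 k L).card * D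
          = if j = k then 0 else 4 * (lab.card * P) := by
        intro k
        by_cases h : j = k
        · subst h; rw [hdiag j, zero_mul, if_pos rfl]
        · rw [if_neg h]; exact hoff j k h
      rw [Finset.sum_congr rfl fun k _ => hterm k]
      have hsum0 : ∑ k : Fin (q + 2), (if j = k then (4 * (lab.card * P)) else 0)
          = 4 * (lab.card * P) := by
        simp [Finset.sum_ite_eq]
      have hsumC : (∑ k : Fin (q + 2), ((if j = k then 0 else 4 * (lab.card * P))
            + (if j = k then (4 * (lab.card * P)) else 0)))
          = (q + 1) * (4 * (lab.card * P)) + 4 * (lab.card * P) := by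
        have hpt : ∀ k : Fin (q + 2), ((if j = k then 0 else 4 * (lab.card * P))
            + (if j = k then (4 * (lab.card * P)) else 0)) = 4 * (lab.card * P) := by
          intro k; split_ifs <;> simp
        rw [Finset.sum_congr rfl fun k _ => hpt k, Finset.sum_const, Finset.card_univ,
          Fintype.card_fin, smul_eq_mul]
        ring
      rw [Finset.sum_add_distrib, hsum0] at hsumC
      exact Nat.add_right_cancel hsumC
    rw [Finset.sum_congr rfl fun j _ => hrow j, Finset.sum_const, Finset.card_univ,
      Fintype.card_fin, smul_eq_mul]
  -- pass to the reals
  have hlabne : ((lab.card : ℕ) : ℝ) ≠ 0 :=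
    Nat.cast_ne_zero.mpr (labelings_nonempty hNsum).card_pos.ne'
  have hDnat : D = (2 * q + 4) * ((2 * q + 3) * ((2 * q + 2) * (2 * q + 1))) := by
    have h1 : 2 * (q + 2) = 2 * q + 4 := by ring
    rw [hD, h1]
    have h2 : 2 * q + 4 - 3 = 2 * q + 1 := by omega
    have h3 : 2 * q + 4 - 2 = 2 * q + 2 := by omega
    have h4 : 2 * q + 4 - 1 = 2 * q + 3 := by omega
    simp only [Nat.descFactorial_succ, Nat.descFactorial_zero, h2, h3, h4, Nat.sub_zero,
      mul_one]
    ring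
  have keyN : Snat * ((2 * q + 4) * ((2 * q + 3) * ((2 * q + 2) * (2 * q + 1))))
      = (q + 2) * ((q + 1) * (4 * (lab.card * P))) := by
    rw [← hDnat]; exact key
  have keyR : (Snat : ℝ) * ((2 * (q : ℝ) + 4) * ((2 * (q : ℝ) + 3)
        * ((2 * (q : ℝ) + 2) * (2 * (q : ℝ) + 1))))
      = ((q : ℝ) + 2) * (((q : ℝ) + 1) * (4 * ((lab.card : ℝ)
          * ((Nc s₁ : ℝ) * ((Nc s₂ : ℝ) * ((Nc s₃ : ℝ) * (Nc s₄ : ℝ))))))) := by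
    have h0 := congrArg (fun n : ℕ => (n : ℝ)) keyN
    push_cast [hP] at h0
    linear_combination h0
  have hval : (Snat : ℝ) = ((q : ℝ) + 2) * (((q : ℝ) + 1) * (4 * ((lab.card : ℝ)
        * ((Nc s₁ : ℝ) * ((Nc s₂ : ℝ) * ((Nc s₃ : ℝ) * (Nc s₄ : ℝ)))))))
      / ((2 * (q : ℝ) + 4) * ((2 * (q : ℝ) + 3)
          * ((2 * (q : ℝ) + 2) * (2 * (q : ℝ) + 1)))) := by
    rw [eq_div_iff (by positivity)]
    exact keyR
  have hden : (((2 * ((q : ℕ) + 2 : ℕ) : ℝ) - 1) * ((2 * ((q : ℕ) + 2 : ℕ) : ℝ) - 3)) ≠ 0 := by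
    have h' : ((2 * ((q : ℕ) + 2 : ℕ) : ℝ) - 1) * ((2 * ((q : ℕ) + 2 : ℕ) : ℝ) - 3)
        = (2 * (q : ℝ) + 3) * (2 * (q : ℝ) + 1) := by push_cast; ring
    rw [h']; positivity
  have hnum : (∑ L ∈ lab, (crossCount (q + 2) K L s₁ s₂ : ℝ) * (crossCount (q + 2) K L s₃ s₄ : ℝ))
      = (Snat : ℝ) := by
    rw [hSnat]; push_cast; rfl
  simp only [expct, ← hlab]
  rw [hnum, div_eq_div_iff hlabne hden, hval]
  have h1 : (2 * (q : ℝ) + 4) ≠ 0 := by positivity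
  have h2 : (2 * (q : ℝ) + 3) ≠ 0 := by positivity
  have h3 : (2 * (q : ℝ) + 2) ≠ 0 := by positivity
  have h4 : (2 * (q : ℝ) + 1) ≠ 0 := by positivity
  push_cast
  field_simp
  ring


end Crossmatch
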